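/- arXiv:2601.01471 — 3 statements merged into one kernel-verified Lean document; each statement's English description precedes it below -/
import Mathlib

section
/- Let (U, Z) be random variables with Z independent of U given L, and suppose the conditional density factorizes additively: p_{A|Z,U,L}(a | z, u, l) = b_a(u, l) + c_a(z, l). Then for any bounded measurable function π(z, l), E[ (π(Z,L) − E[π(Z,L)|L]) · p_{A|Z,U,L}(a|Z,U,L) | U, L ] = E[ (π(Z,L) − E[π(Z,L)|L]) · c_a(Z,L) | L ], which does not depend on U. Consequently the weighting function ω_{a,π}(U,L) := (p_{A|U,L}(a|U,L)/p_{A|L}(a|L)) · (E[π|A=a,U,L] − E[π|L]) / (E[π|A=a,L] − E[π|L]) is identically equal to 1 whenever the denominator is nonzero. -/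
/-!
Since `Z ⟂ U | L`, the weight `p(a|z,u,l) = b u + c z` enters the `π`-moments only through
`N u = ∫ π (b u + c)` and `D u = ∫ (b u + c)`, both affine in `b u`, and the centered moment
`N u - (∫ π) D u = ∫ (π - ∫ π) c` is independent of `u` because `π - ∫ π` has mean zero.
Hence `D u (N u / D u - ∫ π)` is this constant covariance, and so is its `ρ`-average, so the
ratio `ω` is `1`.
-/

open MeasureTheory

section CenteredMoments

variable {α : Type*} [MeasurableSpace α] {μ : Measure α} {f g : α → ℝ}

theorem integral_sub_integral_self [IsProbabilityMeasure μ] (f : α → ℝ) :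
    ∫ x, (f x - ∫ y, f y ∂μ) ∂μ = 0 := by
  simpa only [average_eq_integral] using integral_sub_average μ f

theorem integral_const_add_of_integrable [IsProbabilityMeasure μ] (hf : Integrable f μ) (a : ℝ) :
    ∫ x, (a + f x) ∂μ = a + ∫ x, f x ∂μ := by
  simp [integral_add (integrable_const a) hf]

theorem integral_add_const_of_integrable [IsProbabilityMeasure μ] (hf : Integrable f μ) (a : ℝ) :
    ∫ x, (f x + a) ∂μ = ∫ x, f x ∂μ + a := by
  simp [integral_add hf (integrable_const a)]

theorem integral_mul_const_add (hf : Integrable f μ) (hfg : Integrable (fun x => f x * g x) μ)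
    (a : ℝ) : ∫ x, f x * (a + g x) ∂μ = a * ∫ x, f x ∂μ + ∫ x, f x * g x ∂μ := by
  simp_rw [mul_add, mul_comm (f _) a]
  rw [integral_add (hf.const_mul a) hfg, integral_const_mul]

theorem integrable_sub_integral_mul (hg : Integrable g μ)
    (hfg : Integrable (fun x => f x * g x) μ) :
    Integrable (fun x => (f x - ∫ y, f y ∂μ) * g x) μ := by
  simp_rw [sub_mul]
  exact hfg.sub (hg.const_mul _)

theorem integral_sub_integral_mul [IsProbabilityMeasure μ] (hg : Integrable g μ)
    (hfg : Integrable (fun x => f x * g x) μ) :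
    ∫ x, (f x - ∫ y, f y ∂μ) * g x ∂μ = ∫ x, f x * g x ∂μ - (∫ x, f x ∂μ) * ∫ x, g x ∂μ := by
  simp_rw [sub_mul]
  rw [integral_sub hfg (hg.const_mul _), integral_const_mul]

theorem integral_sub_integral_mul_const_add [IsProbabilityMeasure μ] (hf : Integrable f μ)
    (hg : Integrable g μ) (hfg : Integrable (fun x => f x * g x) μ) (a : ℝ) :
    ∫ x, (f x - ∫ y, f y ∂μ) * (a + g x) ∂μ = ∫ x, (f x - ∫ y, f y ∂μ) * g x ∂μ := by
  rw [integral_mul_const_add (f := fun x => f x - ∫ y, f y ∂μ) (hf.sub (integrable_const _))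
    (integrable_sub_integral_mul hg hfg),
    integral_sub_integral_self, mul_zero, zero_add]

end CenteredMoments

theorem affine_div_sub_eq {x m C P : ℝ} (hx : x + C ≠ 0) :
    (x * m + P) / (x + C) - m = (P - m * C) / (x + C) := by
  field_simp
  ring

theorem affine_weight_ratio_eq_one {x y m C P : ℝ} (hx : x + C ≠ 0) (hy : y + C ≠ 0)
    (hK : P - m * C ≠ 0) :
    (x + C) / (y + C) * ((x * m + P) / (x + C) - m) / ((y * m + P) / (y + C) - m) = 1 := by
  rw [affine_div_sub_eq hx, affine_div_sub_eq hy]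
  field_simp
  exact div_self (by rwa [mul_comm C m])

theorem additive_IV_implies_omega_one_general
    {𝒵 𝒰 : Type*} [MeasurableSpace 𝒵] [MeasurableSpace 𝒰]
    (ν : Measure 𝒵) [IsProbabilityMeasure ν] (ρ : Measure 𝒰) [IsProbabilityMeasure ρ]
    (b : 𝒰 → ℝ) (c : 𝒵 → ℝ) (π : 𝒵 → ℝ)
    (hπ : Integrable π ν)
    (hc : Integrable c ν) (hπc : Integrable (fun z => π z * c z) ν)
    (hb : Integrable b ρ) :
    (∀ u : 𝒰,
      ∫ z, (π z - ∫ z', π z' ∂ν) * (b u + c z) ∂ν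
        = ∫ z, (π z - ∫ z', π z' ∂ν) * c z ∂ν) ∧
    (∀ u : 𝒰,
      (∫ z, (b u + c z) ∂ν) ≠ 0 →
      (∫ u', ∫ z, (b u' + c z) ∂ν ∂ρ) ≠ 0 →
      (∫ z, (π z - ∫ z', π z' ∂ν) * c z ∂ν) ≠ 0 →
      -- ω_{a,π}(u,l) = (p_{A|U,L}/p_{A|L}) · (E[π|A=a,U,L] − E[π|L]) / (E[π|A=a,L] − E[π|L])
      ((∫ z, (b u + c z) ∂ν) / (∫ u', ∫ z, (b u' + c z) ∂ν ∂ρ)) *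
        ((∫ z, π z * (b u + c z) ∂ν) / (∫ z, (b u + c z) ∂ν) - ∫ z, π z ∂ν) /
        ((∫ u', ∫ z, π z * (b u' + c z) ∂ν ∂ρ) / (∫ u', ∫ z, (b u' + c z) ∂ν ∂ρ)
          - ∫ z, π z ∂ν) = 1) := by
  refine ⟨fun u => integral_sub_integral_mul_const_add hπ hc hπc (b u), fun u hD hD' hK => ?_⟩
  have hD_eq (u : 𝒰) : ∫ z, (b u + c z) ∂ν = b u + ∫ z, c z ∂ν :=
    integral_const_add_of_integrable hc (b u)
  have hN_eq (u : 𝒰) : ∫ z, π z * (b u + c z) ∂ν = b u * ∫ z, π z ∂ν + ∫ z, π z * c z ∂ν :=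
    integral_mul_const_add hπ hπc (b u)
  simp only [hD_eq, hN_eq] at hD hD' ⊢
  rw [integral_sub_integral_mul hc hπc] at hK
  rw [integral_add_const_of_integrable hb] at hD' ⊢
  rw [integral_add_const_of_integrable (hb.mul_const _), integral_mul_const]
  exact affine_weight_ratio_eq_one hD hD' hK

/-- One direction of the AIV characterization.  Here `ν` is the conditional law of `Z`
given `L = l` (by `Z ⟂ U | L` it does not depend on `u`), `ρ` is the conditional law of
`U` given `L = l`, and the conditional treatment density is additive:
`p_{A|Z,U,L}(a|z,u,l) = b u + c z`.  Then the centered-`π` weighted conditional density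
does not depend on `u`, and the weight `ω_{a,π}(u,l)` is identically `1` whenever the
relevant denominators are nonzero. -/
theorem additive_IV_implies_omega_one
    {𝒵 𝒰 : Type*} [MeasurableSpace 𝒵] [MeasurableSpace 𝒰]
    (ν : Measure 𝒵) [IsProbabilityMeasure ν] (ρ : Measure 𝒰) [IsProbabilityMeasure ρ]
    (b : 𝒰 → ℝ) (c : 𝒵 → ℝ) (π : 𝒵 → ℝ)
    (hπ : Integrable π ν) (hπbdd : ∃ M : ℝ, ∀ z, |π z| ≤ M)
    (hc : Integrable c ν) (hπc : Integrable (fun z => π z * c z) ν)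
    (hb : Integrable b ρ) :
    (∀ u : 𝒰,
      ∫ z, (π z - ∫ z', π z' ∂ν) * (b u + c z) ∂ν
        = ∫ z, (π z - ∫ z', π z' ∂ν) * c z ∂ν) ∧
    (∀ u : 𝒰,
      (∫ z, (b u + c z) ∂ν) ≠ 0 →
      (∫ u', ∫ z, (b u' + c z) ∂ν ∂ρ) ≠ 0 →
      (∫ z, (π z - ∫ z', π z' ∂ν) * c z ∂ν) ≠ 0 →
      -- ω_{a,π}(u,l) = (p_{A|U,L}/p_{A|L}) · (E[π|A=a,U,L] − E[π|L]) / (E[π|A=a,L] − E[π|L])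
      ((∫ z, (b u + c z) ∂ν) / (∫ u', ∫ z, (b u' + c z) ∂ν ∂ρ)) *
        ((∫ z, π z * (b u + c z) ∂ν) / (∫ z, (b u + c z) ∂ν) - ∫ z, π z ∂ν) /
        ((∫ u', ∫ z, π z * (b u' + c z) ∂ν ∂ρ) / (∫ u', ∫ z, (b u' + c z) ∂ν ∂ρ)
          - ∫ z, π z ∂ν) = 1) :=
  additive_IV_implies_omega_one_general ν ρ b c π hπ hc hπc hb
end

section
/- Let (U, L) be random variables with conditional density p_{A|U,L} and marginal conditional density p_{A|L}(a|l) = E[p_{A|U,L}(a|U,L) | L = l] > 0, and let π be a bounded measurable function with Z ⟂ U | L. Define ω_{a,π}(U,L) := (p_{A|U,L}(a|U,L)/p_{A|L}(a|L)) · (E[π(Z,L)|A=a,U,L] − E[π(Z,L)|L]) / (E[π(Z,L)|A=a,L] − E[π(Z,L)|L]), assuming the denominator is bounded away from zero. Then E[ω_{a,π}(U,L) | L] = 1 almost surely. -/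
open MeasureTheory

/-- Normalization of the AIV weight: `E[ω_{a,π}(U,L) | L] = 1`.  Here `ν ⊗ ρ` is the
conditional law of `(Z, U)` given `L = l` (encoding `Z ⟂ U | L`), `d z u` is the
conditional density `p_{A|Z,U,L}(a|z,u,l)`, so that `p_{A|U,L}(a|u,l) = ∫ d(·,u) dν`,
`p_{A|L}(a|l) = ∫∫ d dν dρ`, `E[π|A=a,U=u,L] = ∫ π d(·,u) dν / ∫ d(·,u) dν`, etc. -/
theorem omega_integrates_to_one
    {𝒵 𝒰 : Type*} [MeasurableSpace 𝒵] [MeasurableSpace 𝒰]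
    (ν : Measure 𝒵) [IsProbabilityMeasure ν] (ρ : Measure 𝒰) [IsProbabilityMeasure ρ]
    (d : 𝒵 → 𝒰 → ℝ) (π : 𝒵 → ℝ)
    (hπ : Integrable π ν) (hπbdd : ∃ M : ℝ, ∀ z, |π z| ≤ M)
    (hd : Integrable (fun p : 𝒵 × 𝒰 => d p.1 p.2) (ν.prod ρ))
    (hπd : Integrable (fun p : 𝒵 × 𝒰 => π p.1 * d p.1 p.2) (ν.prod ρ))
    (hd0 : ∀ u, (∫ z, d z u ∂ν) ≠ 0)
    (hpA : (∫ u, ∫ z, d z u ∂ν ∂ρ) ≠ 0)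
    (hden : (∫ u, ∫ z, π z * d z u ∂ν ∂ρ) / (∫ u, ∫ z, d z u ∂ν ∂ρ)
        - (∫ z, π z ∂ν) ≠ 0) :
    ∫ u, ((∫ z, d z u ∂ν) / (∫ u', ∫ z, d z u' ∂ν ∂ρ)) *
        ((∫ z, π z * d z u ∂ν) / (∫ z, d z u ∂ν) - ∫ z, π z ∂ν) /
        ((∫ u', ∫ z, π z * d z u' ∂ν ∂ρ) / (∫ u', ∫ z, d z u' ∂ν ∂ρ)
          - ∫ z, π z ∂ν) ∂ρ = 1 := by
  set m := ∫ z, π z ∂ν with hm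
  set P := ∫ u, ∫ z, d z u ∂ν ∂ρ with hP
  set Q := ∫ u, ∫ z, π z * d z u ∂ν ∂ρ with hQ
  set C := Q / P - m with hC
  have hDint : Integrable (fun u => ∫ z, d z u ∂ν) ρ := by
    simpa [Function.comp] using hd.swap.integral_prod_left
  have hNint : Integrable (fun u => ∫ z, π z * d z u ∂ν) ρ := by
    simpa [Function.comp] using hπd.swap.integral_prod_left
  have key : ∀ u, ((∫ z, d z u ∂ν) / P) *
      ((∫ z, π z * d z u ∂ν) / (∫ z, d z u ∂ν) - m) / C
      = ((∫ z, π z * d z u ∂ν) - m * (∫ z, d z u ∂ν)) / (P * C) := by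
    intro u
    have h1 := hd0 u
    field_simp
  have hPC : P * C ≠ 0 := mul_ne_zero hpA hden
  calc ∫ u, ((∫ z, d z u ∂ν) / P) *
      ((∫ z, π z * d z u ∂ν) / (∫ z, d z u ∂ν) - m) / C ∂ρ
      = ∫ u, ((∫ z, π z * d z u ∂ν) - m * (∫ z, d z u ∂ν)) / (P * C) ∂ρ := by
        simp_rw [key]
    _ = (∫ u, ((∫ z, π z * d z u ∂ν) - m * (∫ z, d z u ∂ν)) ∂ρ) / (P * C) := by
        rw [integral_div]
    _ = (Q - m * P) / (P * C) := by
        rw [integral_sub hNint (hDint.const_mul m), integral_const_mul]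
    _ = 1 := by
        have : Q - m * P = P * C := by
          rw [hC]; field_simp
        rw [this, div_self hPC]
end

section
/- Degenerate mixed-bias identity: Let A, Z, Y be random variables and define the truth ρ° := E[Z], κ°(a) := E[Z|A=a] − E[Z], λ°(a) := E[Y|A=a], μ°(a) := E[Y(Z − E[Z]) | A = a]/κ°(a), with κ°(a) ≠ 0. For arbitrary real numbers ρ, μ(a), κ(a) ≠ 0, λ(a) (candidate nuisance values) define φ(O) := (Z − ρ)(Y − μ(A))/κ(A) + μ(A) − (E[Z] − ρ)·(λ(A) − μ(A))/κ(A). Then E[φ(O) | A = a] − μ°(a) = (μ(a) − μ°(a))·(1 − κ°(a)/κ(a)) + (ρ − ρ°)·(λ(a) − λ°(a))/κ(a). -/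
open MeasureTheory

/-- Degenerate mixed-bias identity (no covariates).  `ν` is the conditional law of
`(Z, Y)` given `A = a`; `ρ0 = E[Z]` is the marginal mean of `Z`; the truths are
`κ° = E[Z|A=a] − ρ0`, `λ° = E[Y|A=a]`, `μ° = E[Y(Z − ρ0)|A=a]/κ°`.  For arbitrary
nuisance values `ρ, μa, λa` and `κa ≠ 0`, the bias of the plugged-in AIPW score
`φ(O) = (Z − ρ)(Y − μ(A))/κ(A) + μ(A) − (E[Z] − ρ)(λ(A) − μ(A))/κ(A)` at `A = a`
factors into products of nuisance errors:
`E[φ|A=a] − μ° = (μa − μ°)(1 − κ°/κa) + (ρ − ρ°)(λa − λ°)/κa`. -/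
theorem degenerate_mixed_bias
    {Ω : Type*} [MeasurableSpace Ω] (ν : Measure Ω) [IsProbabilityMeasure ν]
    (Z Y : Ω → ℝ) (hZ : Integrable Z ν) (hY : Integrable Y ν)
    (hZY : Integrable (fun ω => Z ω * Y ω) ν)
    (ρ0 ρ μa κa la : ℝ) (hκa : κa ≠ 0)
    (κ0 l0 μ0 : ℝ)
    (hκ0 : κ0 = (∫ ω, Z ω ∂ν) - ρ0) (hκ0ne : κ0 ≠ 0)
    (hl0 : l0 = ∫ ω, Y ω ∂ν)
    (hμ0 : μ0 = (∫ ω, Y ω * (Z ω - ρ0) ∂ν) / κ0) :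
    (∫ ω, (Z ω - ρ) * (Y ω - μa) / κa ∂ν) + μa - (ρ0 - ρ) * (la - μa) / κa - μ0
      = (μa - μ0) * (1 - κ0 / κa) + (ρ - ρ0) * (la - l0) / κa := by
  set IZ := ∫ ω, Z ω ∂ν with hIZ
  set IY := ∫ ω, Y ω ∂ν with hIY
  set IZY := ∫ ω, Z ω * Y ω ∂ν with hIZY
  have hint : ∫ ω, (Z ω - ρ) * (Y ω - μa) / κa ∂ν
      = (IZY - μa * IZ - ρ * IY + ρ * μa) / κa := by
    have h1 : (fun ω => (Z ω - ρ) * (Y ω - μa) / κa)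
        = fun ω => (Z ω * Y ω - μa * Z ω - ρ * Y ω + ρ * μa) * κa⁻¹ := by
      funext ω; ring
    rw [h1, integral_mul_const]
    congr 1
    rw [integral_add, integral_sub, integral_sub, integral_const_mul, integral_const_mul,
      integral_const]
    · simp [hIZ, hIY, hIZY]
    · exact hZY
    · exact (hZ.const_mul μa)
    · exact hZY.sub (hZ.const_mul μa)
    · exact hY.const_mul ρ
    · exact (hZY.sub (hZ.const_mul μa)).sub (hY.const_mul ρ)
    · exact integrable_const _
  have hμ0' : μ0 * κ0 = IZY - ρ0 * IY := by
    rw [hμ0, div_mul_cancel₀ _ hκ0ne]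
    have : (fun ω => Y ω * (Z ω - ρ0)) = fun ω => Z ω * Y ω - ρ0 * Y ω := by
      funext ω; ring
    rw [this, integral_sub hZY (hY.const_mul ρ0), integral_const_mul]
  rw [hint]
  have hIZeq : IZ = κ0 + ρ0 := by rw [hκ0]; ring
  rw [hIZeq, hl0] at *
  field_simp
  nlinarith [hμ0', sq_nonneg κa, sq_nonneg κ0]
end
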